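/- Under the assumptions that W is diagonal on V vertices with 0 = W_m < W_{u₁} ≤ … ≤ W_{u_{V−1}} ≤ V, and defining s_min as the unique point where the ground-state amplitude of G(s) = L + (s/(1−s))W at m equals 1/√2, one has s_min ≥ (1/2)(1 − 1/(V−1)). -/
import Mathlib


open Matrix

/-- The smallest eigenvalue of a Hermitian matrix. -/
noncomputable def lamMin {n : ℕ} {A : Matrix (Fin n) (Fin n) ℝ}
    (hA : A.IsHermitian) : ℝ :=
  ⨅ i, hA.eigenvalues i

/-- The combinatorial Laplacian of the complete graph on `V` vertices:
`L = V·I − J`, where `J` is the all-ones matrix. -/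
def cgL (V : ℕ) : Matrix (Fin V) (Fin V) ℝ :=
  (V : ℝ) • (1 : Matrix (Fin V) (Fin V) ℝ) - Matrix.of (fun _ _ => (1 : ℝ))

/-- The rescaled interpolating Hamiltonian `G(s) = L + (s/(1−s))·W`. -/
noncomputable def cgG (V : ℕ) (W : Fin V → ℝ) (s : ℝ) : Matrix (Fin V) (Fin V) ℝ :=
  cgL V + (s / (1 - s)) • Matrix.diagonal W

set_option maxHeartbeats 1000000 in
/-- With `W` diagonal on `V` vertices, `0 = W m < W u ≤ V` for
`u ≠ m`, the point `s_min` at which the ground-state amplitude of `G(s)` at `m`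
equals `1/√2` satisfies `s_min ≥ (1/2)(1 − 1/(V−1))`. -/
theorem smin_lower_bound {V : ℕ} (hV : 2 ≤ V) (W : Fin V → ℝ) (m : Fin V)
    (hWm : W m = 0) (hmin : ∀ u : Fin V, u ≠ m → 0 < W u)
    (hub : ∀ u : Fin V, W u ≤ V)
    (smin : ℝ) (hs : smin ∈ Set.Ico (0 : ℝ) 1)
    (hG : (cgG V W smin).IsHermitian)
    (φ : Fin V → ℝ) (hpos : ∀ u, 0 < φ u) (hnorm : ∑ u : Fin V, (φ u) ^ 2 = 1)
    (hEig : (cgG V W smin).mulVec φ = lamMin hG • φ)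
    (hhalf : (φ m) ^ 2 = 1 / 2) :
    (1 / 2) * (1 - 1 / ((V : ℝ) - 1)) ≤ smin := by
  obtain ⟨hs0, hs1⟩ := hs
  have h1s : (0:ℝ) < 1 - smin := by linarith
  set c : ℝ := smin / (1 - smin) with hc
  have hc0 : 0 ≤ c := div_nonneg hs0 h1s.le
  obtain ⟨lam, hEig⟩ : ∃ lam : ℝ, (cgG V W smin).mulVec φ = lam • φ := ⟨lamMin hG, hEig⟩
  set S : ℝ := ∑ u, φ u with hSdef
  have hV2 : (2:ℝ) ≤ (V:ℝ) := by exact_mod_cast hV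
  -- key entrywise eigen-equation
  have hk : ∀ u : Fin V, (V:ℝ) * φ u - S + c * (W u * φ u) = lam * φ u := by
    intro u
    have h := congrFun hEig u
    have hL : ((cgG V W smin).mulVec φ) u = (V:ℝ) * φ u - S + c * (W u * φ u) := by
      show (((V : ℝ) • (1 : Matrix (Fin V) (Fin V) ℝ) - Matrix.of (fun _ _ => (1 : ℝ))
          + c • Matrix.diagonal W).mulVec φ) u = _
      simp [Matrix.mulVec, dotProduct, Matrix.add_apply, Matrix.sub_apply,
        Matrix.smul_apply, Matrix.one_apply, Matrix.diagonal_apply, mul_ite, ite_mul,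
        add_mul, sub_mul, Finset.sum_add_distrib, Finset.sum_sub_distrib, Finset.mul_sum,
        hSdef]
      ring
    rw [hL] at h
    simpa using h
  have hSpos : 0 < S := Finset.sum_pos (fun u _ => hpos u)
    ⟨m, Finset.mem_univ m⟩
  clear_value c S
  set x : ℝ := (V:ℝ) - lam with hx
  clear_value x
  -- S = x * φ m
  have hSx : S = x * φ m := by
    have := hk m
    rw [hWm] at this
    simp at this
    rw [hx]
    linear_combination -this
  have hφm : 0 < φ m := hpos m
  have hx0 : 0 < x := by
    rcases lt_trichotomy x 0 with h | h | h
    · nlinarith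
    · nlinarith
    · exact h
  -- lam * S = c * T, T := ∑ W u * φ u
  set T : ℝ := ∑ u, W u * φ u with hT
  have hsum : lam * S = c * T := by
    have h1 : ∑ u, ((V:ℝ) * φ u - S + c * (W u * φ u)) = ∑ u, lam * φ u :=
      Finset.sum_congr rfl (fun u _ => hk u)
    have h2 : ∑ u : Fin V, S = (V:ℝ) * S := by
      simp [Finset.sum_const, Finset.card_univ, mul_comm]
    rw [Finset.sum_add_distrib, Finset.sum_sub_distrib, ← Finset.mul_sum, ← Finset.mul_sum,
      ← Finset.mul_sum, h2] at h1
    rw [← hSdef] at h1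
    linarith [h1]
  clear_value T
  have hT0 : 0 ≤ T := hT ▸ Finset.sum_nonneg (fun u _ => by
    rcases eq_or_ne u m with rfl | h
    · simp [hWm]
    · exact le_of_lt (mul_pos (hmin u h) (hpos u)))
  have hlam0 : 0 ≤ lam := by nlinarith
  -- T ≤ V * (S - φ m)
  have hTle : T ≤ (V:ℝ) * (S - φ m) := by
    have h1 : T = ∑ u ∈ Finset.univ.erase m, W u * φ u := by
      rw [hT, ← Finset.add_sum_erase _ _ (Finset.mem_univ m), hWm]
      ring
    have h2 : S - φ m = ∑ u ∈ Finset.univ.erase m, φ u := by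
      rw [hSdef, ← Finset.add_sum_erase _ _ (Finset.mem_univ m)]
      ring
    rw [h1, h2, Finset.mul_sum]
    exact Finset.sum_le_sum (fun u hu => mul_le_mul_of_nonneg_right (hub u) (hpos u).le)
  -- (B): x * (V - x) ≤ c * V * (x - 1)
  have hB : x * ((V:ℝ) - x) ≤ c * V * (x - 1) := by
    have : lam * S ≤ c * ((V:ℝ) * (S - φ m)) :=
      hsum ▸ mul_le_mul_of_nonneg_left hTle hc0
    rw [hSx] at this
    have h3 : lam = (V:ℝ) - x := by rw [hx]; ring
    nlinarith [this, hφm]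
  -- erase-sum of squares = 1/2
  have herase : ∑ u ∈ Finset.univ.erase m, (φ u)^2 = 1/2 := by
    have := Finset.add_sum_erase Finset.univ (fun u => (φ u)^2) (Finset.mem_univ m)
    rw [hnorm] at this
    have h' : (φ m)^2 + ∑ u ∈ Finset.univ.erase m, (φ u)^2 = 1 := this
    linarith [hhalf, h']
  -- (A): (V-1) * x^2 ≤ (x + c*V)^2
  have hA : ((V:ℝ) - 1) * x^2 ≤ (x + c*(V:ℝ))^2 := by
    have hper : ∀ u ∈ Finset.univ.erase m, S^2 ≤ (x + c*(V:ℝ))^2 * (φ u)^2 := by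
      intro u hu
      have hum : u ≠ m := Finset.ne_of_mem_erase hu
      have hkey := hk u
      have h1 : (x + c * W u) * φ u = S := by
        rw [hx]; nlinarith [hkey]
      have h2 : S ≤ (x + c*(V:ℝ)) * φ u := by
        rw [← h1]
        have : c * W u ≤ c * V := mul_le_mul_of_nonneg_left (hub u) hc0
        nlinarith [hpos u]
      calc S^2 ≤ ((x + c*(V:ℝ)) * φ u)^2 := by nlinarith [hSpos]
        _ = (x + c*(V:ℝ))^2 * (φ u)^2 := by ring
    have hsum2 : ∑ u ∈ Finset.univ.erase m, S^2 ≤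
        ∑ u ∈ Finset.univ.erase m, (x + c*(V:ℝ))^2 * (φ u)^2 :=
      Finset.sum_le_sum hper
    have hcard : (Finset.univ.erase m).card = V - 1 := by
      rw [Finset.card_erase_of_mem (Finset.mem_univ m), Finset.card_univ, Fintype.card_fin]
    have hL2 : ∑ u ∈ Finset.univ.erase m, S^2 = ((V:ℝ) - 1) * S^2 := by
      rw [Finset.sum_const, hcard, nsmul_eq_mul]
      congr 1
      have : ((V - 1 : ℕ) : ℝ) = (V:ℝ) - 1 := by
        rw [Nat.cast_sub (by omega)]; simp
      rw [this]
    have hR2 : ∑ u ∈ Finset.univ.erase m, (x + c*(V:ℝ))^2 * (φ u)^2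
        = (x + c*(V:ℝ))^2 * (1/2) := by
      rw [← Finset.mul_sum, herase]
    rw [hL2, hR2] at hsum2
    have hS2 : S^2 = x^2 * (1/2) := by rw [hSx]; nlinarith [hhalf]
    have h6 : ((V:ℝ)-1) * x^2 = 2 * (((V:ℝ)-1) * S^2) := by rw [hS2]; ring
    rw [h6]
    linarith [hsum2]
  -- main bound: c * V ≥ V - 2
  set q : ℝ := Real.sqrt ((V:ℝ) - 1) with hq
  have hq0 : 0 ≤ q := Real.sqrt_nonneg _
  have hq2 : q^2 = (V:ℝ) - 1 := Real.sq_sqrt (by linarith)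
  have hq1 : 1 ≤ q := by nlinarith
  have hAx : q * x ≤ x + c * (V:ℝ) := by
    nlinarith [hA, mul_nonneg hq0 hx0.le, mul_nonneg hc0 (by linarith : (0:ℝ) ≤ (V:ℝ))]
  have hcV : (V:ℝ) - 2 ≤ c * (V:ℝ) := by
    rcases le_or_gt (q + 1) x with hcase | hcase
    · -- c*V ≥ (q-1)*x ≥ (q-1)(q+1) = V-2
      nlinarith [hAx]
    · -- x < q + 1 : first show 1 < x
      have hx1 : 1 < x := by
        by_contra h
        push_neg at h
        have h1 : c * (V:ℝ) * (x - 1) ≤ 0 :=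
          mul_nonpos_of_nonneg_of_nonpos (mul_nonneg hc0 (by linarith)) (by linarith)
        have h2 : 0 ≤ x * ((V:ℝ) - x) := by
          have : (V:ℝ) - x = lam := by rw [hx]; ring
          rw [this]; exact mul_nonneg hx0.le hlam0
        have h3 : x * ((V:ℝ) - x) = 0 := le_antisymm (le_trans hB h1) h2
        have h4 : (V:ℝ) - x = 0 := by
          rcases mul_eq_zero.mp h3 with h | h
          · exact absurd h hx0.ne'
          · exact h
        nlinarith
      have hx2 : (x - 1)^2 < (V:ℝ) - 1 := by nlinarith
      nlinarith [hB, hx1]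
  -- conclude
  have hs2 : smin * (2 * ((V:ℝ) - 1)) ≥ (V:ℝ) - 2 := by
    have : c * (V:ℝ) = smin * (V:ℝ) / (1 - smin) := by rw [hc]; ring
    rw [this] at hcV
    rw [ge_iff_le, ← sub_nonneg]
    have h5 : smin * (V:ℝ) ≥ ((V:ℝ) - 2) * (1 - smin) := by
      rw [ge_iff_le, ← le_div_iff₀ h1s] at *
      linarith [hcV]
    nlinarith [h5]
  have hVn1 : (0:ℝ) < (V:ℝ) - 1 := by linarith
  rw [show (1/2 : ℝ) * (1 - 1/((V:ℝ)-1)) = ((V:ℝ) - 2) / (2 * ((V:ℝ)-1)) by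
    field_simp; ring]
  rw [div_le_iff₀ (by positivity)]
  linarith [hs2]
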